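/- arXiv:1105.2183 — 5 statements merged into one kernel-verified Lean document; each statement's English description precedes it below -/
import Mathlib

section
/- For all k ≥ 0, n ≥ 1 and r > 0, P(T_r > k·n) ≤ P(T_{2r} > n)^k. -/
/-!
Split the first `k * n` steps into `k` blocks of length `n`. If the walk stays in the ball of
radius `r` up to time `k * n`, then within each block it moves by at most `2 * r` from where the
block started, so each block, read as a walk of its own, does not leave the ball of radius `2 * r`
during its `n` steps. The blocks are independent and all distributed like the first `n` steps,
so the probability of this intersection is `P(T_{2r} > n) ^ k`.
-/

open MeasureTheory ProbabilityTheory Set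

/-- The first exit time of the random walk with steps `X` from the closed ball of
radius `r` (valued in `ℕ∞`, equal to `⊤` if the walk never exits). -/
noncomputable def exitTime {Ω B : Type*} [NormedAddCommGroup B]
    (X : ℕ → Ω → B) (r : ℝ) (ω : Ω) : ℕ∞ :=
  sInf {n : ℕ∞ | ∃ m : ℕ, n = m ∧ r < ‖∑ k ∈ Finset.range m, X k ω‖}

section exitTime

variable {Ω Ω' B : Type*} [NormedAddCommGroup B] (X : ℕ → Ω → B) (r : ℝ)

lemma natCast_lt_exitTime_iff {m : ℕ} {ω : Ω} :
    (m : ℕ∞) < exitTime X r ω ↔ ∀ j ≤ m, ‖∑ l ∈ Finset.range j, X l ω‖ ≤ r := by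
  rw [← ENat.add_one_le_iff (ENat.natCast_ne_top m), exitTime, le_sInf_iff]
  constructor
  · intro h j hj
    by_contra! hexit
    have := h _ ⟨j, rfl, hexit⟩
    norm_cast at this
    omega
  · rintro h _ ⟨j, rfl, hexit⟩
    by_contra! hj
    norm_cast at hj
    exact (h j (by omega)).not_gt hexit

lemma natCast_lt_exitTime_congr {X' : ℕ → Ω' → B} {m : ℕ} {ω : Ω} {ω' : Ω'}
    (h : ∀ l < m, X l ω = X' l ω') :
    (m : ℕ∞) < exitTime X r ω ↔ (m : ℕ∞) < exitTime X' r ω' := by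
  simp only [natCast_lt_exitTime_iff]
  refine forall₂_congr fun j hj ↦ ?_
  rw [Finset.sum_congr rfl fun l hl ↦ h l (by grind)]

lemma natCast_lt_exitTime_shift {a m : ℕ} {ω : Ω}
    (h : ((a + m : ℕ) : ℕ∞) < exitTime X r ω) :
    (m : ℕ∞) < exitTime (fun l ↦ X (a + l)) (2 * r) ω := by
  rw [natCast_lt_exitTime_iff] at h ⊢
  intro j hj
  rw [← Finset.sum_range_add_sub_sum_range (fun l ↦ X l ω)]
  calc _ ≤ ‖∑ l ∈ Finset.range (a + j), X l ω‖ + ‖∑ l ∈ Finset.range a, X l ω‖ :=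
        norm_sub_le _ _
    _ ≤ r + r := add_le_add (h _ (by omega)) (h _ (by omega))
    _ = 2 * r := by ring

lemma measurableSet_natCast_lt_exitTime [MeasurableSpace Ω] [MeasurableSpace B]
    [OpensMeasurableSpace B] [MeasurableAdd₂ B] (hX : ∀ l, Measurable (X l)) (m : ℕ) :
    MeasurableSet {ω | (m : ℕ∞) < exitTime X r ω} := by
  simp only [natCast_lt_exitTime_iff, ofPred_forall]
  exact .iInter fun j ↦ .iInter fun _ ↦
    measurableSet_le (Finset.measurable_sum _ fun l _ ↦ hX l).norm measurable_const

end exitTime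

namespace ProbabilityTheory

variable {Ω : Type*} {mΩ : MeasurableSpace Ω} {P : Measure Ω}

lemma iIndepFun.curry {ι : Type*} {κ : ι → Type*} {𝓧 : (i : ι) → κ i → Type*}
    {m𝓧 : ∀ i j, MeasurableSpace (𝓧 i j)} {X : (i : ι) → (j : κ i) → Ω → 𝓧 i j}
    (mX : ∀ i j, Measurable (X i j))
    (h : iIndepFun (fun (p : (i : ι) × κ i) ω ↦ X p.1 p.2 ω) P) :
    iIndepFun (fun i ω ↦ (X i · ω)) P := by
  have := h.isProbabilityMeasure
  have _ i j := Measure.isProbabilityMeasure_map (μ := P) (mX i j).aemeasurable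
  have hcurry : (fun ω i j ↦ X i j ω)
      = MeasurableEquiv.piCurry 𝓧 ∘ fun ω (p : (i : ι) × κ i) ↦ X p.1 p.2 ω := by
    ext; simp [Sigma.curry]
  rw [iIndepFun_iff_map_fun_eq_infinitePi_map (by fun_prop), hcurry,
    ← Measure.map_map (by fun_prop) (by fun_prop),
    h.map_fun_eq_infinitePi_map (by fun_prop),
    Measure.infinitePi_map_piCurry (fun i j ↦ P.map (X i j))]
  congr with i : 1
  exact ((h.precomp sigma_mk_injective).map_fun_eq_infinitePi_map (by fun_prop)).symm

lemma iIndepFun.identDistrib_precomp {ι κ β : Type*} [Fintype κ] [MeasurableSpace β]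
    {X : ι → Ω → β} (mX : ∀ i, Measurable (X i)) (h : iIndepFun X P)
    {f g : κ → ι} (hf : f.Injective) (hg : g.Injective)
    (hfg : ∀ j, IdentDistrib (X (f j)) (X (g j)) P P) :
    IdentDistrib (fun ω j ↦ X (f j) ω) (fun ω j ↦ X (g j) ω) P P where
  aemeasurable_fst := by fun_prop
  aemeasurable_snd := by fun_prop
  map_eq := by
    rw [(h.precomp hf).map_fun_eq_pi_map (fun j ↦ (mX _).aemeasurable),
      (h.precomp hg).map_fun_eq_pi_map (fun j ↦ (mX _).aemeasurable)]
    simp_rw [(hfg _).map_eq]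

lemma iIndepFun.iIndepFun_blocks {β : Type*} [MeasurableSpace β] {X : ℕ → Ω → β}
    (mX : ∀ i, Measurable (X i)) (h : iIndepFun X P) (n : ℕ) :
    iIndepFun (fun i ω (l : Fin n) ↦ X (i * n + l) ω) P := by
  refine iIndepFun.curry (X := fun i (l : Fin n) ↦ X (i * n + l)) (fun _ _ ↦ mX _)
    (h.precomp (g := fun p : (_ : ℕ) × Fin n ↦ p.1 * n + p.2) ?_)
  rintro ⟨i, l⟩ ⟨i', l'⟩ hil
  have hi : i = i' := by
    have := congrArg (· / n) hil
    simp only at this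
    rwa [Nat.mul_comm, Nat.mul_add_div l.pos, Nat.mul_comm, Nat.mul_add_div l.pos,
      Nat.div_eq_of_lt l.2, Nat.div_eq_of_lt l'.2] at this
  subst hi
  simp_all [Fin.ext_iff]

lemma iIndepFun.identDistrib_blocks {β : Type*} [MeasurableSpace β] {X : ℕ → Ω → β}
    (mX : ∀ i, Measurable (X i)) (h : iIndepFun X P) (hid : ∀ i, IdentDistrib (X i) (X 0) P P)
    (n i : ℕ) :
    IdentDistrib (fun ω (l : Fin n) ↦ X (i * n + l) ω) (fun ω (l : Fin n) ↦ X l ω) P P :=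
  h.identDistrib_precomp mX ((add_right_injective _).comp Fin.val_injective) Fin.val_injective
    fun _ ↦ (hid _).trans (hid _).symm

end ProbabilityTheory

theorem stmt5_general {Ω : Type*} [MeasureSpace Ω]
    {B : Type*} [NormedAddCommGroup B] [MeasurableSpace B] [BorelSpace B]
    [SecondCountableTopology B]
    (X : ℕ → Ω → B) (hmeas : ∀ i, Measurable (X i))
    (hindep : iIndepFun X ℙ)
    (hid : ∀ i, IdentDistrib (X i) (X 0) ℙ ℙ)
    (r : ℝ) (k n : ℕ) :
    ℙ {ω | ((k * n : ℕ) : ℕ∞) < exitTime X r ω}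
      ≤ ℙ {ω | (n : ℕ∞) < exitTime X (2 * r) ω} ^ k := by
  -- The walk driven by the coordinates of `v : Fin n → B`, padded by zeros after time `n`,
  -- where `n < exitTime` does not look.
  set D : Set (Fin n → B) :=
    {v | (n : ℕ∞) < exitTime (fun l v ↦ if h : l < n then v ⟨l, h⟩ else 0) (2 * r) v}
  have hD : MeasurableSet D := measurableSet_natCast_lt_exitTime _ _ (fun l ↦ by
    by_cases h : l < n <;> simp [h, measurable_pi_apply]) n
  have mem_D {Z : ℕ → Ω → B} (ω : Ω) :
      (fun l : Fin n ↦ Z l ω) ∈ D ↔ (n : ℕ∞) < exitTime Z (2 * r) ω :=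
    natCast_lt_exitTime_congr _ _ fun l hl ↦ dif_pos hl
  calc ℙ {ω | ((k * n : ℕ) : ℕ∞) < exitTime X r ω}
      ≤ ℙ (⋂ i ∈ Finset.range k, (fun ω (l : Fin n) ↦ X (i * n + l) ω) ⁻¹' D) := by
        refine measure_mono fun ω hω ↦ mem_iInter₂.2 fun i hi ↦ mem_preimage.2 ?_
        refine (mem_D (Z := fun l ↦ X (i * n + l)) ω).2 (natCast_lt_exitTime_shift X r ?_)
        refine lt_of_le_of_lt ?_ hω
        have := Finset.mem_range.1 hi
        norm_cast
        nlinarith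
    _ = ∏ i ∈ Finset.range k, ℙ ((fun ω (l : Fin n) ↦ X (i * n + l) ω) ⁻¹' D) :=
        (hindep.iIndepFun_blocks hmeas n).meas_biInter fun _ _ ↦ ⟨D, hD, rfl⟩
    _ = ∏ _i ∈ Finset.range k, ℙ ((fun ω (l : Fin n) ↦ X l ω) ⁻¹' D) :=
        Finset.prod_congr rfl fun i _ ↦
          (hindep.identDistrib_blocks hmeas hid n i).measure_mem_eq hD
    _ = ℙ {ω | (n : ℕ∞) < exitTime X (2 * r) ω} ^ k := by
        rw [Finset.prod_const, Finset.card_range]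
        congr 2
        ext ω
        exact mem_D (Z := X) ω

/-- `P(T_r > k n) ≤ P(T_{2r} > n)^k` for all `k ≥ 0`, `n ≥ 1`, `r > 0`. -/
theorem stmt5 {Ω : Type*} [MeasureSpace Ω] [IsProbabilityMeasure (ℙ : Measure Ω)]
    {B : Type*} [NormedAddCommGroup B] [NormedSpace ℝ B] [MeasurableSpace B] [BorelSpace B]
    [SecondCountableTopology B] [CompleteSpace B]
    (X : ℕ → Ω → B) (hmeas : ∀ i, Measurable (X i))
    (hindep : iIndepFun X ℙ)
    (hid : ∀ i, IdentDistrib (X i) (X 0) ℙ ℙ)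
    (r : ℝ) (hr : 0 < r) (k n : ℕ) (hn : 1 ≤ n) :
    ℙ {ω | ((k * n : ℕ) : ℕ∞) < exitTime X r ω}
      ≤ ℙ {ω | (n : ℕ∞) < exitTime X (2 * r) ω} ^ k :=
  stmt5_general X hmeas hindep hid r k n
end

section
/- For any B-valued random variable X with E‖X‖² < ∞ and S_n the sum of n i.i.d. copies of X, Var(‖S_n‖) ≤ 4 n E‖X‖². -/
/-!
Write `‖Sₙ‖ = f (X₁, …, Xₙ)` with `f x = ‖∑ xᵢ‖`, which satisfies `|f x - f y| ≤ ∑ ‖xᵢ - yᵢ‖`.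
For any such `f` and i.i.d. coordinates of law `μ` we show `Var f ≤ n E‖X‖²` (an Efron–Stein
bound) by induction on `n`: splitting off the first coordinate, the law of total variance on
`μ ⊗ μⁿ` writes `Var f` as the mean of the variances of the slices `b ↦ f (b, x)` plus the
variance of the averaged function `g x = ∫ f (b, x) dμ(b)`. Each slice is 1-Lipschitz, so its
variance is at most `E (f (b, x) - f (0, x))² ≤ E‖X‖²`, and `g` satisfies the same Lipschitz
condition in the remaining `n` coordinates.
-/

open MeasureTheory ProbabilityTheory
open scoped ENNReal NNReal

lemma LipschitzWith.memLp_comp {α E : Type*} [MeasurableSpace α] [NormedAddCommGroup E]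
    {μ : Measure α} [IsFiniteMeasure μ] {p : ℝ≥0∞} {K : ℝ≥0} {g : E → ℝ} {f : α → E}
    (hg : LipschitzWith K g) (hf : MemLp f p μ) : MemLp (g ∘ f) p μ := by
  have h0 := (hg.sub (LipschitzWith.const (g 0))).comp_memLp (by simp) hf
  convert h0.add (memLp_const (g 0)) using 1
  ext
  simp

lemma lipschitzWith_of_abs_sub_le_sum_norm {ι B : Type*} [Fintype ι] [NormedAddCommGroup B]
    {f : (ι → B) → ℝ} (hf : ∀ x y, |f x - f y| ≤ ∑ i, ‖x i - y i‖) :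
    LipschitzWith (Fintype.card ι) f := by
  refine LipschitzWith.of_dist_le_mul fun x y ↦ ?_
  calc dist (f x) (f y) ≤ ∑ i, ‖x i - y i‖ := hf x y
    _ ≤ ∑ _i : ι, dist x y := by
      gcongr with i
      rw [← dist_eq_norm]
      exact dist_le_pi_dist x y i
    _ = Fintype.card ι * dist x y := by simp

lemma abs_norm_sum_sub_norm_sum_le {ι E : Type*} [Fintype ι] [SeminormedAddCommGroup E]
    (x y : ι → E) : |‖∑ i, x i‖ - ‖∑ i, y i‖| ≤ ∑ i, ‖x i - y i‖ :=
  (abs_norm_sub_norm_le _ _).trans <| by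
    rw [← Finset.sum_sub_distrib]
    exact norm_sum_le _ _

lemma MeasureTheory.measurePreserving_fin_cons {α : Type*} [MeasurableSpace α] (μ : Measure α)
    [SigmaFinite μ] (n : ℕ) :
    MeasurePreserving (fun p : α × (Fin n → α) ↦ (Fin.cons p.1 p.2 : Fin (n + 1) → α))
      (μ.prod (Measure.pi fun _ ↦ μ)) (Measure.pi fun _ ↦ μ) := by
  convert (measurePreserving_piFinSuccAbove (fun _ : Fin (n + 1) ↦ μ) 0).symm with p
  simp [MeasurableEquiv.piFinSuccAbove_symm_apply, Fin.insertNthEquiv]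

namespace ProbabilityTheory

section Product

variable {α β : Type*} [MeasurableSpace α] [MeasurableSpace β]
  {μ : Measure α} {ν : Measure β} [IsProbabilityMeasure μ] [IsProbabilityMeasure ν]

lemma variance_prod_eq {F : α × β → ℝ} (hF : MemLp F 2 (μ.prod ν))
    (hslice : ∀ y, MemLp (fun x ↦ F (x, y)) 2 μ)
    (hmean : MemLp (fun y ↦ ∫ x, F (x, y) ∂μ) 2 ν) :
    Var[F; μ.prod ν]
      = ∫ y, Var[fun x ↦ F (x, y); μ] ∂ν + Var[fun y ↦ ∫ x, F (x, y) ∂μ; ν] := by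
  have hsq : Integrable (fun y ↦ ∫ x, F (x, y) ^ 2 ∂μ) ν :=
    hF.integrable_sq.integral_prod_right
  simp_rw [variance_eq_sub hF, variance_eq_sub hmean, variance_eq_sub (hslice _), Pi.pow_apply,
    integral_prod_symm _ hF.integrable_sq, integral_prod_symm _ (hF.integrable one_le_two),
    integral_sub hsq hmean.integrable_sq]
  ring

lemma variance_pi_fin_succ {n : ℕ} {f : (Fin (n + 1) → α) → ℝ}
    (hf : AEMeasurable f (Measure.pi fun _ ↦ μ)) :
    Var[f; Measure.pi fun _ ↦ μ]
      = Var[fun p : α × (Fin n → α) ↦ f (Fin.cons p.1 p.2); μ.prod (Measure.pi fun _ ↦ μ)] :=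
  ((measurePreserving_fin_cons μ n).variance_fun_comp hf).symm

end Product

section Pi

variable {B : Type*} [NormedAddCommGroup B] [MeasurableSpace B] {μ : Measure B}
  [IsProbabilityMeasure μ]

lemma memLp_id_pi {ι : Type*} [Fintype ι] (hμ : MemLp id 2 μ) :
    MemLp id 2 (Measure.pi fun _ : ι ↦ μ) :=
  MemLp.of_eval fun i ↦ hμ.comp_measurePreserving (measurePreserving_eval _ i)

lemma memLp_of_abs_sub_le_sum_norm {ι : Type*} [Fintype ι] (hμ : MemLp id 2 μ)
    {f : (ι → B) → ℝ} (hf : ∀ x y, |f x - f y| ≤ ∑ i, ‖x i - y i‖) :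
    MemLp f 2 (Measure.pi fun _ : ι ↦ μ) :=
  (lipschitzWith_of_abs_sub_le_sum_norm hf).memLp_comp (memLp_id_pi hμ)

variable [BorelSpace B]

lemma variance_le_integral_norm_sq {h : B → ℝ} (hh : LipschitzWith 1 h) (hμ : MemLp id 2 μ) :
    Var[h; μ] ≤ ∫ b, ‖b‖ ^ 2 ∂μ := by
  have hm : AEStronglyMeasurable (fun b ↦ h b - h 0) μ :=
    (hh.continuous.sub continuous_const).aestronglyMeasurable
  rw [← variance_sub_const hh.continuous.aestronglyMeasurable (h 0)]
  refine (variance_le_expectation_sq hm).trans <| integral_mono_of_nonneg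
    (.of_forall fun b ↦ sq_nonneg _) hμ.norm.integrable_sq (.of_forall fun b ↦ ?_)
  have hb : |h b - h 0| ≤ ‖b‖ := by simpa [Real.dist_eq] using hh.dist_le_mul b 0
  simpa [sq_abs] using pow_le_pow_left₀ (abs_nonneg _) hb 2

theorem variance_pi_le_of_abs_sub_le_sum_norm (hμ : MemLp id 2 μ) :
    ∀ {n : ℕ} {f : (Fin n → B) → ℝ}, (∀ x y, |f x - f y| ≤ ∑ i, ‖x i - y i‖) →
      Var[f; Measure.pi fun _ ↦ μ] ≤ n * ∫ b, ‖b‖ ^ 2 ∂μ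
  | 0, f, _ => by
    have hconst : f = fun _ ↦ f 0 := funext fun x ↦ congrArg f (Subsingleton.elim x 0)
    rw [hconst, variance_eq_integral aemeasurable_const]
    simp
  | n + 1, f, hf => by
    set F : B × (Fin n → B) → ℝ := fun p ↦ f (Fin.cons p.1 p.2)
    have hF : ∀ a b x y, |F (a, x) - F (b, y)| ≤ ‖a - b‖ + ∑ i, ‖x i - y i‖ := fun a b x y ↦ by
      simpa [Fin.sum_univ_succ] using hf (Fin.cons a x) (Fin.cons b y)
    have hslice : ∀ y, LipschitzWith 1 fun x ↦ F (x, y) := fun y ↦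
      LipschitzWith.of_dist_le_mul fun a b ↦ by simpa [Real.dist_eq, dist_eq_norm] using hF a b y y
    have hmean : ∀ x y, |∫ a, F (a, x) ∂μ - ∫ a, F (a, y) ∂μ| ≤ ∑ i, ‖x i - y i‖ := fun x y ↦ by
      have hint : ∀ x, Integrable (fun a ↦ F (a, x)) μ := fun x ↦
        ((hslice x).memLp_comp hμ).integrable one_le_two
      rw [← integral_sub (hint x) (hint y)]
      simpa using norm_integral_le_of_norm_le_const (μ := μ)
        (f := fun a ↦ F (a, x) - F (a, y)) (.of_forall fun a ↦ by simpa using hF a a x y)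
    have hf2 := memLp_of_abs_sub_le_sum_norm hμ hf
    have hF2 : MemLp F 2 (μ.prod (Measure.pi fun _ ↦ μ)) :=
      hf2.comp_measurePreserving (measurePreserving_fin_cons μ n)
    have hfirst : ∫ y, Var[fun x ↦ F (x, y); μ] ∂(Measure.pi fun _ ↦ μ) ≤ ∫ b, ‖b‖ ^ 2 ∂μ := by
      refine (integral_mono_of_nonneg (.of_forall fun y ↦ variance_nonneg _ _) (integrable_const _)
        (.of_forall fun y ↦ variance_le_integral_norm_sq (hslice y) hμ)).trans_eq ?_
      simp
    have hsecond := variance_pi_le_of_abs_sub_le_sum_norm hμ hmean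
    rw [variance_pi_fin_succ hf2.aestronglyMeasurable.aemeasurable, variance_prod_eq hF2
      (fun y ↦ (hslice y).memLp_comp hμ) (memLp_of_abs_sub_le_sum_norm hμ hmean)]
    push_cast
    linarith

end Pi

end ProbabilityTheory

theorem stmt8_general {Ω : Type*} [MeasureSpace Ω] [IsProbabilityMeasure (ℙ : Measure Ω)]
    {B : Type*} [NormedAddCommGroup B] [MeasurableSpace B] [BorelSpace B]
    [SecondCountableTopology B]
    (X : ℕ → Ω → B)
    (hindep : iIndepFun X ℙ)
    (hid : ∀ i, IdentDistrib (X i) (X 0) ℙ ℙ)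
    (hL2 : MemLp (X 0) 2 ℙ) (n : ℕ) :
    variance (fun ω => ‖∑ k ∈ Finset.range n, X k ω‖) ℙ
      ≤ 4 * n * ∫ ω, ‖X 0 ω‖ ^ 2 := by
  set μ := Measure.map (X 0) ℙ
  have hX : ∀ i, AEMeasurable (X i) := fun i ↦ (hid i).aemeasurable_fst
  have : IsProbabilityMeasure μ := Measure.isProbabilityMeasure_map (hX 0)
  have hμ : MemLp id 2 μ := (memLp_map_measure_iff aestronglyMeasurable_id (hX 0)).2 hL2
  have hlaw : Measure.map (fun ω (i : Fin n) ↦ X i ω) ℙ = Measure.pi fun _ ↦ μ := by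
    rw [(hindep.precomp Fin.val_injective).map_fun_eq_pi_map fun i : Fin n ↦ hX i]
    simp_rw [(hid _).map_eq, μ]
  have hsum : (fun ω ↦ ‖∑ k ∈ Finset.range n, X k ω‖)
      = (fun x : Fin n → B ↦ ‖∑ i, x i‖) ∘ fun ω i ↦ X i ω :=
    funext fun ω ↦ by simp [Fin.sum_univ_eq_sum_range (X · ω)]
  calc Var[fun ω ↦ ‖∑ k ∈ Finset.range n, X k ω‖; ℙ]
      = Var[fun x : Fin n → B ↦ ‖∑ i, x i‖; Measure.pi fun _ ↦ μ] := by
        rw [hsum, ← hlaw, variance_map (by fun_prop) (by fun_prop)]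
    _ ≤ n * ∫ b, ‖b‖ ^ 2 ∂μ :=
        variance_pi_le_of_abs_sub_le_sum_norm hμ (abs_norm_sum_sub_norm_sum_le (E := B))
    _ = n * ∫ ω, ‖X 0 ω‖ ^ 2 := by rw [integral_map (hX 0) (by fun_prop)]
    _ ≤ 4 * n * ∫ ω, ‖X 0 ω‖ ^ 2 := by
        gcongr
        linarith [(n.cast_nonneg : (0 : ℝ) ≤ n)]

/-- de Acosta's inequality: for i.i.d. `B`-valued `X` with
`E‖X‖² < ∞` and `Sₙ` the sum of `n` i.i.d. copies, `Var(‖Sₙ‖) ≤ 4 n E‖X‖²`. -/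
theorem stmt8 {Ω : Type*} [MeasureSpace Ω] [IsProbabilityMeasure (ℙ : Measure Ω)]
    {B : Type*} [NormedAddCommGroup B] [NormedSpace ℝ B] [MeasurableSpace B] [BorelSpace B]
    [SecondCountableTopology B] [CompleteSpace B]
    (X : ℕ → Ω → B) (hmeas : ∀ i, Measurable (X i))
    (hindep : iIndepFun X ℙ)
    (hid : ∀ i, IdentDistrib (X i) (X 0) ℙ ℙ)
    (hL2 : MemLp (X 0) 2 ℙ) (n : ℕ) :
    variance (fun ω => ‖∑ k ∈ Finset.range n, X k ω‖) ℙ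
      ≤ 4 * n * ∫ ω, ‖X 0 ω‖ ^ 2 :=
  stmt8_general X hindep hid hL2 n
end

section
/- For an i.i.d. random walk in a separable Banach space, the first exit time from the ball of radius r equals the first exit time of the walk built from the steps radially truncated at 3r: T_r = T̂_r almost surely, where T̂_r = min{n : ‖Ŝ_n‖ > r} and Ŝ_n is the sum of the truncated steps X̂_k. -/
/-!
The argument is pathwise. A walk that stays in the ball of radius `r` only takes steps of norm
at most `2r`. So while the truncated walk stays in the ball it has truncated nothing and agrees
with the original walk; and a step of norm above `3r` makes either walk exit at once. Hence
neither walk exits before the other.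
-/

open MeasureTheory ProbabilityTheory Set
open scoped ENNReal NNReal Topology

section ExitTime

variable {Ω B : Type*} [NormedAddCommGroup B]

theorem sum_range_eq_of_norm_sum_range_le {x y : ℕ → B} {r : ℝ}
    (hstep : ∀ k, y k = x k ∨ 2 * r < ‖y k‖) {n : ℕ}
    (hy : ∀ i ≤ n, ‖∑ k ∈ Finset.range i, y k‖ ≤ r) :
    ∑ k ∈ Finset.range n, y k = ∑ k ∈ Finset.range n, x k := by
  induction n with
  | zero => simp
  | succ n ih =>
    have hsum := ih fun i hi => hy i (hi.trans n.le_succ)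
    rcases hstep n with heq | hlong
    · rw [Finset.sum_range_succ, Finset.sum_range_succ, hsum, heq]
    · have hstep_le : ‖y n‖ ≤ 2 * r := calc
        ‖y n‖ = ‖∑ k ∈ Finset.range (n + 1), y k - ∑ k ∈ Finset.range n, y k‖ := by
          rw [Finset.sum_range_succ, add_sub_cancel_left]
        _ ≤ ‖∑ k ∈ Finset.range (n + 1), y k‖ + ‖∑ k ∈ Finset.range n, y k‖ := norm_sub_le _ _
        _ ≤ 2 * r := by linarith [hy (n + 1) le_rfl, hy n n.le_succ]
      exact absurd hlong hstep_le.not_gt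

theorem exitTime_le_exitTime {X Y : ℕ → Ω → B} {r : ℝ} {ω : Ω}
    (hstep : ∀ k, Y k ω = X k ω ∨ 2 * r < ‖Y k ω‖) :
    exitTime Y r ω ≤ exitTime X r ω := by
  refine le_sInf ?_
  rintro _ ⟨m, rfl, hm⟩
  obtain ⟨i, him, hi⟩ : ∃ i ≤ m, r < ‖∑ k ∈ Finset.range i, Y k ω‖ := by
    by_contra! hY
    rw [← sum_range_eq_of_norm_sum_range_le hstep hY] at hm
    exact hm.not_ge (hY m le_rfl)
  calc exitTime Y r ω ≤ i := sInf_le ⟨i, rfl, hi⟩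
    _ ≤ m := by exact_mod_cast him

theorem exitTime_eq_exitTime {X Y : ℕ → Ω → B} {r : ℝ} {ω : Ω}
    (hstep : ∀ k, Y k ω = X k ω ∨ 2 * r < ‖X k ω‖ ∧ 2 * r < ‖Y k ω‖) :
    exitTime X r ω = exitTime Y r ω :=
  le_antisymm (exitTime_le_exitTime fun k => (hstep k).imp Eq.symm And.left)
    (exitTime_le_exitTime fun k => (hstep k).imp id And.right)

end ExitTime

theorem norm_div_norm_smul {B : Type*} [NormedAddCommGroup B] [NormedSpace ℝ B] {x : B}
    (hx : x ≠ 0) (c : ℝ) : ‖(c / ‖x‖) • x‖ = |c| := by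
  rw [norm_smul, Real.norm_eq_abs, abs_div, abs_norm, div_mul_cancel₀ _ (norm_ne_zero_iff.mpr hx)]

theorem stmt13_general {Ω : Type*} [MeasureSpace Ω]
    {B : Type*} [NormedAddCommGroup B] [NormedSpace ℝ B]
    (X : ℕ → Ω → B)
    (r : ℝ) (hr : 0 < r)
    (Xhat : ℕ → Ω → B)
    (hXhat : ∀ k ω, Xhat k ω =
      if ‖X k ω‖ ≤ 3 * r then X k ω else (3 * r / ‖X k ω‖) • X k ω) :
    ∀ᵐ ω ∂ℙ, exitTime X r ω = exitTime Xhat r ω := by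
  refine .of_forall fun ω => exitTime_eq_exitTime fun k => ?_
  rw [hXhat]
  split_ifs with hsmall
  · exact .inl rfl
  · have hlong : 3 * r < ‖X k ω‖ := not_le.mp hsmall
    have hx : X k ω ≠ 0 := norm_pos_iff.mp (by linarith)
    rw [norm_div_norm_smul hx, abs_of_pos (by linarith)]
    exact .inr ⟨by linarith, by linarith⟩

/-- the exit time of the walk from the ball of radius `r` coincides
almost surely with the exit time of the walk whose steps are radially truncated
at level `3r`. -/
theorem stmt13 {Ω : Type*} [MeasureSpace Ω] [IsProbabilityMeasure (ℙ : Measure Ω)]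
    {B : Type*} [NormedAddCommGroup B] [NormedSpace ℝ B] [MeasurableSpace B] [BorelSpace B]
    [SecondCountableTopology B] [CompleteSpace B]
    (X : ℕ → Ω → B) (hmeas : ∀ i, Measurable (X i))
    (hindep : iIndepFun X ℙ)
    (hid : ∀ i, IdentDistrib (X i) (X 0) ℙ ℙ)
    (r : ℝ) (hr : 0 < r)
    (Xhat : ℕ → Ω → B)
    (hXhat : ∀ k ω, Xhat k ω =
      if ‖X k ω‖ ≤ 3 * r then X k ω else (3 * r / ‖X k ω‖) • X k ω) :
    ∀ᵐ ω ∂ℙ, exitTime X r ω = exitTime Xhat r ω :=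
  stmt13_general X r hr Xhat hXhat
end

section
/- Suppose there is a constant c such that for every mean-zero square-integrable B-valued X, limsup_{r→∞} sup_{n≥1} n P(T_r > n)/r² ≤ c / E‖X‖². Then for every such X, liminf_{n→∞} E‖S_n‖²/n ≥ E‖X‖²/(32 c); in particular B is cotype 2. -/
open MeasureTheory ProbabilityTheory Set Filter
open scoped ENNReal NNReal Topology

/-!
Fix `0 < b < E‖X‖²/(32c)` and put `r² = 16bn`. As `c/E‖X‖² < 1/(32b)`, the hypothesis gives
`P(T_r > n) ≤ r²/(32bn) = 1/2` for large `n`. The norms `‖Sₖ‖` form a nonnegative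
submartingale, so Doob's maximal inequality turns `P(max_{k≤n} ‖Sₖ‖ ≥ r) ≥ 1/2` into
`E‖Sₙ‖ ≥ r/2`, and Jensen's inequality gives `E‖Sₙ‖² ≥ r²/4 = 4bn`.
-/

theorem lt_exitTime_iff {Ω B : Type*} [NormedAddCommGroup B] {X : ℕ → Ω → B} {r : ℝ}
    {n : ℕ} {ω : Ω} :
    (n : ℕ∞) < exitTime X r ω ↔ ∀ m ≤ n, ‖∑ k ∈ Finset.range m, X k ω‖ ≤ r := by
  rw [← ENat.add_one_le_iff (ENat.natCast_ne_top n), exitTime, le_sInf_iff]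
  simp only [mem_ofPred_eq, forall_exists_index, and_imp, forall_comm (α := ℕ∞), forall_eq]
  refine forall_congr' fun m => ?_
  rw [← not_imp_not, not_le, not_lt, ← Nat.cast_add_one, Nat.cast_lt, Nat.lt_succ_iff]

namespace MeasureTheory

variable {Ω E : Type*} {m0 : MeasurableSpace Ω} {μ : Measure Ω}
  [NormedAddCommGroup E] [NormedSpace ℝ E] [CompleteSpace E]

theorem Martingale.submartingale_norm {ι : Type*} [Preorder ι] {ℱ : Filtration ι m0}
    {f : ι → Ω → E} (hf : Martingale f ℱ μ) :
    Submartingale (fun i ω => ‖f i ω‖) ℱ μ := by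
  refine ⟨fun i => (hf.stronglyAdapted i).norm, fun i j hij => ?_, fun i => (hf.integrable i).norm⟩
  filter_upwards [hf.condExp_ae_eq hij, norm_condExp_le (m := ℱ i) (μ := μ) (f j)] with ω h1 h2
  rwa [← h1]

theorem Submartingale.mul_measureReal_le_integral [IsFiniteMeasure μ] {ℱ : Filtration ℕ m0}
    {f : ℕ → Ω → ℝ} (hf : Submartingale f ℱ μ) (hnonneg : 0 ≤ f) {ε : ℝ} (hε : 0 ≤ ε) (n : ℕ) :
    ε * μ.real {ω | ε ≤ (Finset.range (n + 1)).sup' Finset.nonempty_range_add_one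
      fun k => f k ω} ≤ ∫ ω, f n ω ∂μ := by
  set s := {ω | ε ≤ (Finset.range (n + 1)).sup' Finset.nonempty_range_add_one fun k => f k ω}
  have hdoob := maximal_ineq hf hnonneg (ε := ε.toNNReal) n
  rw [Real.coe_toNNReal ε hε] at hdoob
  calc ε * μ.real s = (ε.toNNReal * μ s).toReal := by
        rw [ENNReal.toReal_mul, ENNReal.coe_toReal, Real.coe_toNNReal ε hε, measureReal_def]
    _ ≤ ∫ ω in s, f n ω ∂μ :=
        ENNReal.toReal_le_of_le_ofReal (setIntegral_nonneg_of_ae (ae_of_all _ (hnonneg n))) hdoob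
    _ ≤ ∫ ω, f n ω ∂μ := setIntegral_le_integral (hf.integrable n) (ae_of_all _ (hnonneg n))

end MeasureTheory

theorem sq_integral_le_integral_sq {Ω : Type*} {m0 : MeasurableSpace Ω} {μ : Measure Ω}
    [IsProbabilityMeasure μ] {f : Ω → ℝ} (hf : MemLp f 2 μ) :
    (∫ ω, f ω ∂μ) ^ 2 ≤ ∫ ω, f ω ^ 2 ∂μ := by
  have h := variance_nonneg f μ
  rw [variance_eq_sub hf] at h
  simpa using h

namespace ProbabilityTheory

variable {Ω E : Type*} {m0 : MeasurableSpace Ω} {μ : Measure Ω}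
  [NormedAddCommGroup E] [NormedSpace ℝ E] [CompleteSpace E] [MeasurableSpace E] [BorelSpace E]
  [SecondCountableTopology E]

theorem iIndepFun.martingale_partialSum {X : ℕ → Ω → E} (hX : ∀ i, StronglyMeasurable (X i))
    (hind : iIndepFun X μ) (hint : ∀ i, Integrable (X i) μ) (hmean : ∀ i, μ[X i] = 0) :
    Martingale (fun n ω => ∑ k ∈ Finset.range (n + 1), X k ω) (Filtration.natural X hX) μ := by
  have := hind.isProbabilityMeasure
  refine martingale_of_condExp_sub_eq_zero_nat (fun n => ?_)
    (fun n => integrable_finsetSum _ fun k _ => hint k) (fun n => ?_)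
  · exact Finset.stronglyMeasurable_fun_sum _ fun k hk =>
      (Filtration.stronglyAdapted_natural hX).stronglyMeasurable_le
        (Nat.lt_succ_iff.mp (Finset.mem_range.mp hk))
  · have hdiff : (fun ω => ∑ k ∈ Finset.range (n + 1 + 1), X k ω) -
        (fun ω => ∑ k ∈ Finset.range (n + 1), X k ω) = X (n + 1) := by
      ext ω; simp [Finset.sum_range_succ]
    rw [hdiff]
    filter_upwards [hind.condExp_natural_ae_eq_of_lt hX n.lt_succ_self] with ω hω
    rw [hω, hmean]; rfl

theorem iIndepFun.mul_one_sub_measureReal_lt_exitTime_le {X : ℕ → Ω → E}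
    (hX : ∀ i, Measurable (X i)) (hind : iIndepFun X μ) (hint : ∀ i, Integrable (X i) μ)
    (hmean : ∀ i, μ[X i] = 0) {r : ℝ} (hr : 0 ≤ r) {n : ℕ} (hn : n ≠ 0) :
    r * (1 - μ.real {ω | (n : ℕ∞) < exitTime X r ω}) ≤
      ∫ ω, ‖∑ k ∈ Finset.range n, X k ω‖ ∂μ := by
  have := hind.isProbabilityMeasure
  obtain ⟨n, rfl⟩ := Nat.exists_eq_add_one_of_ne_zero hn
  set A := {ω | ((n + 1 : ℕ) : ℕ∞) < exitTime X r ω}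
  set M := {ω | r ≤ (Finset.range (n + 1)).sup' Finset.nonempty_range_add_one
      fun k => ‖∑ j ∈ Finset.range (k + 1), X j ω‖}
  have hAM : A ∪ M = univ := by
    refine eq_univ_of_forall fun ω => or_iff_not_imp_left.mpr fun hω => ?_
    simp only [A, mem_ofPred_eq, lt_exitTime_iff, not_forall, not_le] at hω
    obtain ⟨m, hmn, hrm⟩ := hω
    have hm : m ≠ 0 := by
      rintro rfl
      simp only [Finset.range_zero, Finset.sum_empty, norm_zero] at hrm
      linarith
    obtain ⟨k, rfl⟩ := Nat.exists_eq_add_one_of_ne_zero hm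
    exact hrm.le.trans (Finset.le_sup' (fun k => ‖∑ j ∈ Finset.range (k + 1), X j ω‖)
      (Finset.mem_range.mpr (by omega)))
  have hM : 1 - μ.real A ≤ μ.real M := by
    have := measureReal_union_le (μ := μ) A M
    rw [hAM, probReal_univ] at this
    linarith
  have hdoob := ((hind.martingale_partialSum (fun i => (hX i).stronglyMeasurable) hint
    hmean).submartingale_norm).mul_measureReal_le_integral (fun _ _ => norm_nonneg _) hr n
  exact (mul_le_mul_of_nonneg_left hM hr).trans hdoob

theorem iIndepFun.sq_mul_one_sub_measureReal_lt_exitTime_le {X : ℕ → Ω → E}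
    (hX : ∀ i, Measurable (X i)) (hind : iIndepFun X μ) (hL2 : ∀ i, MemLp (X i) 2 μ)
    (hmean : ∀ i, μ[X i] = 0) {r : ℝ} (hr : 0 ≤ r) {n : ℕ} (hn : n ≠ 0) :
    (r * (1 - μ.real {ω | (n : ℕ∞) < exitTime X r ω})) ^ 2 ≤
      ∫ ω, ‖∑ k ∈ Finset.range n, X k ω‖ ^ 2 ∂μ := by
  have := hind.isProbabilityMeasure
  calc (r * (1 - μ.real {ω | (n : ℕ∞) < exitTime X r ω})) ^ 2
      ≤ (∫ ω, ‖∑ k ∈ Finset.range n, X k ω‖ ∂μ) ^ 2 :=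
        pow_le_pow_left₀ (mul_nonneg hr (sub_nonneg.mpr measureReal_le_one))
          (hind.mul_one_sub_measureReal_lt_exitTime_le hX
          (fun i => (hL2 i).integrable one_le_two) hmean hr hn) 2
    _ ≤ ∫ ω, ‖∑ k ∈ Finset.range n, X k ω‖ ^ 2 ∂μ :=
        sq_integral_le_integral_sq (memLp_finsetSum _ fun i _ => hL2 i).norm

end ProbabilityTheory

theorem stmt17_general {B : Type*} [NormedAddCommGroup B] [NormedSpace ℝ B] [MeasurableSpace B]
    [BorelSpace B] [SecondCountableTopology B] [CompleteSpace B]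
    (c : ℝ)
    (H : ∀ (Ω : Type) [MeasureSpace Ω] [IsProbabilityMeasure (ℙ : Measure Ω)]
      (X : ℕ → Ω → B), (∀ i, Measurable (X i)) →
      iIndepFun X ℙ →
      (∀ i, IdentDistrib (X i) (X 0) ℙ ℙ) →
      MemLp (X 0) 2 ℙ → (∫ ω, X 0 ω) = 0 →
      0 < (∫ ω, ‖X 0 ω‖ ^ 2) →
      ∀ b : ℝ, c / (∫ ω, ‖X 0 ω‖ ^ 2) < b →
        ∀ᶠ r : ℝ in atTop, ∀ n : ℕ, 1 ≤ n →
          n * (ℙ {ω | (n : ℕ∞) < exitTime X r ω}).toReal / r ^ 2 ≤ b) :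
    ∀ (Ω : Type) [MeasureSpace Ω] [IsProbabilityMeasure (ℙ : Measure Ω)]
      (X : ℕ → Ω → B), (∀ i, Measurable (X i)) →
      iIndepFun X ℙ →
      (∀ i, IdentDistrib (X i) (X 0) ℙ ℙ) →
      MemLp (X 0) 2 ℙ → (∫ ω, X 0 ω) = 0 →
      ∀ b : ℝ, b < (∫ ω, ‖X 0 ω‖ ^ 2) / (32 * c) →
        ∀ᶠ n : ℕ in atTop,
          b ≤ (∫ ω, ‖∑ k ∈ Finset.range n, X k ω‖ ^ 2) / n := by
  intro Ω _ _ X hX hind hid hL2 hmean b hb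
  rcases le_or_gt b 0 with hb0 | hb0
  · exact .of_forall fun n => hb0.trans (by positivity)
  set σ2 := ∫ ω, ‖X 0 ω‖ ^ 2
  obtain ⟨hσ2, hc⟩ : 0 < σ2 ∧ 0 < 32 * c := by
    refine (div_pos_iff.mp (hb0.trans hb)).resolve_right fun h => h.1.not_ge ?_
    exact integral_nonneg fun ω => by positivity
  have hbound : c / σ2 < 1 / (32 * b) := by
    rw [div_lt_div_iff₀ hσ2 (by positivity), one_mul]
    rw [lt_div_iff₀ hc] at hb
    linarith
  obtain ⟨r₀, hr₀⟩ := eventually_atTop.mp (H Ω X hX hind hid hL2 hmean hσ2 _ hbound)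
  filter_upwards [eventually_ge_atTop 1,
    tendsto_natCast_atTop_atTop.eventually_ge_atTop (r₀ ^ 2 / (16 * b))] with n hn hnr₀
  set r := Real.sqrt (16 * b * n)
  have hn0 : (0 : ℝ) < n := by exact_mod_cast hn
  have hr2 : r ^ 2 = 16 * b * n := Real.sq_sqrt (by positivity)
  have hr0 : 0 < r := Real.sqrt_pos.mpr (by positivity)
  have hstay : (ℙ {ω | (n : ℕ∞) < exitTime X r ω}).toReal ≤ 1 / 2 := by
    have := hr₀ r (Real.le_sqrt_of_sq_le ((div_le_iff₀' (by positivity)).mp hnr₀)) n hn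
    rw [div_le_iff₀ (by positivity), hr2] at this
    field_simp at this
    nlinarith
  have hmoment := hind.sq_mul_one_sub_measureReal_lt_exitTime_le hX
    (fun i => (hid i).symm.memLp_snd hL2) (fun i => (hid i).integral_eq.trans hmean)
    hr0.le (n := n) (by omega)
  rw [measureReal_def] at hmoment
  rw [le_div_iff₀ hn0]
  calc b * n ≤ (r / 2) ^ 2 := by nlinarith
    _ ≤ (r * (1 - (ℙ {ω | (n : ℕ∞) < exitTime X r ω}).toReal)) ^ 2 :=
        pow_le_pow_left₀ (by positivity) (by nlinarith) 2
    _ ≤ _ := hmoment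

/-- if there is a constant `c` such that for every mean-zero
square-integrable `B`-valued `X` (with `E‖X‖² > 0`, so that the bound `c/E‖X‖²`
is meaningful), `limsup_{r→∞} sup_{n ≥ 1} n P(T_r > n)/r² ≤ c/E‖X‖²`
(expressed via: every `b` above the bound is an eventual upper bound), then for
every mean-zero square-integrable `X`,
`liminf_{n→∞} E‖Sₙ‖²/n ≥ E‖X‖²/(32c)`; in particular `B` is cotype 2. -/
theorem stmt17 {B : Type*} [NormedAddCommGroup B] [NormedSpace ℝ B] [MeasurableSpace B]
    [BorelSpace B] [SecondCountableTopology B] [CompleteSpace B]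
    (c : ℝ) (hc : 0 < c)
    (H : ∀ (Ω : Type) [MeasureSpace Ω] [IsProbabilityMeasure (ℙ : Measure Ω)]
      (X : ℕ → Ω → B), (∀ i, Measurable (X i)) →
      iIndepFun X ℙ →
      (∀ i, IdentDistrib (X i) (X 0) ℙ ℙ) →
      MemLp (X 0) 2 ℙ → (∫ ω, X 0 ω) = 0 →
      0 < (∫ ω, ‖X 0 ω‖ ^ 2) →
      ∀ b : ℝ, c / (∫ ω, ‖X 0 ω‖ ^ 2) < b →
        ∀ᶠ r : ℝ in atTop, ∀ n : ℕ, 1 ≤ n →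
          n * (ℙ {ω | (n : ℕ∞) < exitTime X r ω}).toReal / r ^ 2 ≤ b) :
    ∀ (Ω : Type) [MeasureSpace Ω] [IsProbabilityMeasure (ℙ : Measure Ω)]
      (X : ℕ → Ω → B), (∀ i, Measurable (X i)) →
      iIndepFun X ℙ →
      (∀ i, IdentDistrib (X i) (X 0) ℙ ℙ) →
      MemLp (X 0) 2 ℙ → (∫ ω, X 0 ω) = 0 →
      ∀ b : ℝ, b < (∫ ω, ‖X 0 ω‖ ^ 2) / (32 * c) →
        ∀ᶠ n : ℕ in atTop,
          b ≤ (∫ ω, ‖∑ k ∈ Finset.range n, X k ω‖ ^ 2) / n :=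
  stmt17_general c H
end

section
/- Let B = ℓ^p with 2 ≤ p < ∞ and let X₁, …, Xₙ be i.i.d. symmetric ℓ^p-valued random variables with coordinates X_{i,j}. Then there are constants depending only on p such that E‖Sₙ‖^p is comparable to ∑_{j=1}^∞ E(∑_{i=1}^n X_{i,j}²)^{p/2}, and hence (by Rosenthal's inequality) comparable to n^{p/2} ∑_j (E X_{1,j}²)^{p/2} + n ∑_j E|X_{1,j}|^p. -/
open MeasureTheory ProbabilityTheory Finset Nat
open scoped ENNReal

/-!
By symmetry, for every fixed choice of signs `εᵢ` the sequence `(εᵢ Xᵢ)` has the law of `(Xᵢ)`.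
Averaging over all sign patterns turns `E‖Sₙ‖^p = ∑_j E|∑ᵢ X_{i,j}|^p` into a Rademacher
average in each coordinate, which Khintchine's inequality compares with `(∑ᵢ X_{i,j}²)^{p/2}`;
the upper Khintchine bound comes from the even moments
`E(∑ εᵢ aᵢ)^{2m} ≤ (2m)! (∑ aᵢ²)^m`, proved one summand at a time (odd powers of `±a`
cancel).

Rosenthal's inequality for the i.i.d. nonnegative `Vᵢ = X_{i,j}²` and `q = p/2` rests on
`E S^q = ∑ᵢ E[Vᵢ S^{q-1}] ≤ 2^{q-1} (n EV · E S^{q-1} + n EV^q)`, using that `Vᵢ` is independent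
of `S - Vᵢ`. Jensen gives `E S^{q-1} ≤ (E S^q)^{(q-1)/q}`, and when `E S^q` is finite this term
can be absorbed into the left side. The lower bound is Jensen together with superadditivity of
`x ↦ x^q`.
-/

section Khintchine

lemma sum_range_two_mul_add_one_of_odd_eq_zero {M : Type*} [AddCommMonoid M] (f : ℕ → M)
    (hf : ∀ j, f (2 * j + 1) = 0) (l : ℕ) :
    ∑ k ∈ range (2 * l + 1), f k = ∑ j ∈ range (l + 1), f (2 * j) := by
  induction l with
  | zero => simp
  | succ l ih =>
    rw [show 2 * (l + 1) + 1 = 2 * l + 1 + 1 + 1 by ring, sum_range_succ, sum_range_succ, ih, hf,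
      add_zero, sum_range_succ _ (l + 1), mul_add_one]

lemma add_pow_two_mul_add_sub_pow_two_mul {R : Type*} [CommRing R] (x y : R) (l : ℕ) :
    (y + x) ^ (2 * l) + (y - x) ^ (2 * l)
      = ∑ j ∈ range (l + 1),
          2 * ((2 * l).choose (2 * j) : R) * (x ^ 2) ^ j * y ^ (2 * (l - j)) := by
  rw [add_comm y x, sub_eq_neg_add, add_pow, add_pow, ← sum_add_distrib,
    sum_range_two_mul_add_one_of_odd_eq_zero]
  · refine sum_congr rfl fun j _ => ?_
    rw [(even_two_mul j).neg_pow, ← pow_mul, ← Nat.mul_sub]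
    ring
  · intro j
    rw [(odd_two_mul_add_one j).neg_pow]
    ring

lemma choose_two_mul_mul_factorial_le (l i : ℕ) (hi : i ≤ l) :
    (2 * l).choose (2 * i) * (2 * (l - i))! ≤ (2 * l)! * l.choose i := by
  have h := Nat.choose_mul_factorial_mul_factorial (show 2 * i ≤ 2 * l by omega)
  rw [← Nat.mul_sub] at h
  calc (2 * l).choose (2 * i) * (2 * (l - i))!
      ≤ (2 * l).choose (2 * i) * (2 * i)! * (2 * (l - i))! := by
        rw [mul_right_comm]; exact Nat.le_mul_of_pos_right _ (factorial_pos _)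
    _ = (2 * l)! := h
    _ ≤ (2 * l)! * l.choose i := Nat.le_mul_of_pos_right _ (choose_pos hi)

lemma sq_rpow_div_two (x p : ℝ) : (x ^ 2) ^ (p / 2) = |x| ^ p := by
  rw [Real.rpow_div_two_eq_sqrt _ (sq_nonneg x), Real.sqrt_sq_eq_abs]

variable {ι : Type*} [DecidableEq ι]

/-- The signed sum `∑_{i ∈ s} εᵢ aᵢ` with `εᵢ = -1` exactly for `i ∈ t`; summing over
`t ∈ s.powerset` runs over all sign patterns. -/
def rademacherSum (s t : Finset ι) (a : ι → ℝ) : ℝ :=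
  ∑ i ∈ s, if i ∈ t then -a i else a i

lemma sum_powerset_insert_rademacherSum {M : Type*} [AddCommMonoid M] {s : Finset ι} {j : ι}
    (hj : j ∉ s) (a : ι → ℝ) (f : ℝ → M) :
    ∑ t ∈ (insert j s).powerset, f (rademacherSum (insert j s) t a)
      = ∑ t ∈ s.powerset, (f (rademacherSum s t a + a j) + f (rademacherSum s t a - a j)) := by
  rw [sum_powerset_insert hj, ← sum_add_distrib]
  refine sum_congr rfl fun t ht => ?_
  have hjt : j ∉ t := fun h => hj (mem_powerset.1 ht h)
  have hs : ∀ i ∈ s, (if i ∈ insert j t then -a i else a i) = if i ∈ t then -a i else a i :=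
    fun i hi => by simp [ne_of_mem_of_not_mem hi hj]
  simp only [rademacherSum, sum_insert hj, mem_insert_self, if_true, hjt, if_false,
    sum_congr rfl hs]
  congr 2 <;> ring

lemma sum_powerset_rademacherSum_sq (s : Finset ι) (a : ι → ℝ) :
    ∑ t ∈ s.powerset, rademacherSum s t a ^ 2 = 2 ^ #s * ∑ i ∈ s, a i ^ 2 := by
  induction s using Finset.induction_on with
  | empty => simp [rademacherSum]
  | insert j s hj ih =>
    rw [sum_powerset_insert_rademacherSum hj (f := fun x => x ^ 2), card_insert_of_notMem hj,
      sum_insert hj]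
    have h : ∀ t ∈ s.powerset, (rademacherSum s t a + a j) ^ 2 + (rademacherSum s t a - a j) ^ 2
        = 2 * rademacherSum s t a ^ 2 + 2 * a j ^ 2 := fun _ _ => by ring
    rw [sum_congr rfl h, sum_add_distrib, ← mul_sum, ih, sum_const, card_powerset, nsmul_eq_mul]
    push_cast
    ring

lemma sum_powerset_rademacherSum_pow_le (s : Finset ι) (a : ι → ℝ) (l : ℕ) :
    ∑ t ∈ s.powerset, rademacherSum s t a ^ (2 * l)
      ≤ 2 ^ #s * (2 * l)! * (∑ i ∈ s, a i ^ 2) ^ l := by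
  induction s using Finset.induction_on generalizing l with
  | empty => cases l <;> simp [rademacherSum]
  | insert j s hj ih =>
    set S := ∑ i ∈ s, a i ^ 2
    have hterm : ∀ i ∈ range (l + 1),
        ∑ t ∈ s.powerset, 2 * ((2 * l).choose (2 * i) : ℝ) * (a j ^ 2) ^ i
            * rademacherSum s t a ^ (2 * (l - i))
          ≤ 2 * 2 ^ #s * (2 * l)! * (l.choose i * (a j ^ 2) ^ i * S ^ (l - i)) := by
      intro i hi
      have hil : i ≤ l := Nat.lt_succ_iff.1 (mem_range.1 hi)
      have hc : ((2 * l).choose (2 * i) : ℝ) * (2 * (l - i))! ≤ (2 * l)! * l.choose i := by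
        exact_mod_cast choose_two_mul_mul_factorial_le l i hil
      rw [← mul_sum]
      calc 2 * ((2 * l).choose (2 * i) : ℝ) * (a j ^ 2) ^ i
            * ∑ t ∈ s.powerset, rademacherSum s t a ^ (2 * (l - i))
          ≤ 2 * ((2 * l).choose (2 * i) : ℝ) * (a j ^ 2) ^ i
            * (2 ^ #s * (2 * (l - i))! * S ^ (l - i)) := by gcongr; exact ih _
        _ = 2 * 2 ^ #s * (((2 * l).choose (2 * i) : ℝ) * (2 * (l - i))!)
            * ((a j ^ 2) ^ i * S ^ (l - i)) := by ring
        _ ≤ 2 * 2 ^ #s * ((2 * l)! * l.choose i) * ((a j ^ 2) ^ i * S ^ (l - i)) := by gcongr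
        _ = _ := by ring
    calc ∑ t ∈ (insert j s).powerset, rademacherSum (insert j s) t a ^ (2 * l)
        = ∑ i ∈ range (l + 1), ∑ t ∈ s.powerset, 2 * ((2 * l).choose (2 * i) : ℝ)
            * (a j ^ 2) ^ i * rademacherSum s t a ^ (2 * (l - i)) := by
          rw [sum_powerset_insert_rademacherSum hj (f := fun x => x ^ (2 * l)), sum_comm]
          exact sum_congr rfl fun t _ => add_pow_two_mul_add_sub_pow_two_mul _ _ _
      _ ≤ ∑ i ∈ range (l + 1), 2 * 2 ^ #s * (2 * l)! * (l.choose i * (a j ^ 2) ^ i * S ^ (l - i)) :=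
          sum_le_sum hterm
      _ = 2 ^ #(insert j s) * (2 * l)! * (∑ i ∈ insert j s, a i ^ 2) ^ l := by
          rw [card_insert_of_notMem hj, sum_insert hj, add_pow, mul_sum]
          exact sum_congr rfl fun i _ => by ring

lemma khintchine_lower {p : ℝ} (hp : 2 ≤ p) (s : Finset ι) (a : ι → ℝ) :
    2 ^ #s * (∑ i ∈ s, a i ^ 2) ^ (p / 2) ≤ ∑ t ∈ s.powerset, |rademacherSum s t a| ^ p := by
  set N : ℝ := 2 ^ #s
  set S := ∑ i ∈ s, a i ^ 2
  have hN : 0 < N := by positivity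
  have hNq : 0 < N ^ (p / 2) := by positivity
  have h := Real.rpow_sum_le_const_mul_sum_rpow_of_nonneg (s := s.powerset)
    (f := fun t => rademacherSum s t a ^ 2) (p := p / 2) (by linarith) fun _ _ => sq_nonneg _
  rw [card_powerset, Nat.cast_pow, Nat.cast_ofNat] at h
  simp only [sum_powerset_rademacherSum_sq, sq_rpow_div_two] at h
  rw [Real.mul_rpow hN.le (sum_nonneg fun _ _ => sq_nonneg _), Real.rpow_sub_one hN.ne'] at h
  calc N * S ^ (p / 2) = N / N ^ (p / 2) * (N ^ (p / 2) * S ^ (p / 2)) := by field_simp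
    _ ≤ N / N ^ (p / 2) * (N ^ (p / 2) / N * ∑ t ∈ s.powerset, |rademacherSum s t a| ^ p) := by
        gcongr
    _ = ∑ t ∈ s.powerset, |rademacherSum s t a| ^ p := by field_simp

lemma khintchine_upper {p : ℝ} (hp : 0 < p) (s : Finset ι) (a : ι → ℝ) :
    ∑ t ∈ s.powerset, |rademacherSum s t a| ^ p
      ≤ 2 ^ #s * (2 * ⌈p / 2⌉₊)! * (∑ i ∈ s, a i ^ 2) ^ (p / 2) := by
  set m := ⌈p / 2⌉₊
  set r := 2 * m / p
  set N : ℝ := 2 ^ #s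
  set S := ∑ i ∈ s, a i ^ 2
  have hN : 0 < N := by positivity
  have hS : 0 ≤ S := sum_nonneg fun _ _ => sq_nonneg _
  have hm : p / 2 ≤ m := Nat.le_ceil _
  have hr : 1 ≤ r := by rw [le_div_iff₀ hp]; linarith
  have hpr : p * r = 2 * m := by simp only [r]; field_simp
  have h := Real.rpow_sum_le_const_mul_sum_rpow_of_nonneg (s := s.powerset)
    (f := fun t => |rademacherSum s t a| ^ p) hr fun _ _ => by positivity
  have hpow : ∀ t, (|rademacherSum s t a| ^ p) ^ r = rademacherSum s t a ^ (2 * m) := fun t => by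
    rw [← Real.rpow_mul (abs_nonneg _), hpr, ← Nat.cast_ofNat, ← Nat.cast_mul, Real.rpow_natCast,
      (even_two_mul m).pow_abs]
  rw [card_powerset, Nat.cast_pow, Nat.cast_ofNat] at h
  simp only [hpow] at h
  have hfact : ((2 * m)! : ℝ) ≤ ((2 * m)! : ℝ) ^ r :=
    Real.self_le_rpow_of_one_le (Nat.one_le_cast.2 (factorial_pos _)) hr
  rw [← Real.rpow_le_rpow_iff (by positivity) (by positivity) (by positivity : 0 < r)]
  calc (∑ t ∈ s.powerset, |rademacherSum s t a| ^ p) ^ r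
      ≤ N ^ (r - 1) * (N * (2 * m)! * S ^ m) :=
        h.trans (by gcongr; exact sum_powerset_rademacherSum_pow_le s a m)
    _ = N ^ r * (2 * m)! * S ^ m := by
        rw [Real.rpow_sub_one hN.ne']; field_simp
    _ ≤ N ^ r * ((2 * m)! : ℝ) ^ r * S ^ m := by gcongr
    _ = (N * (2 * m)! * S ^ (p / 2)) ^ r := by
        rw [Real.mul_rpow (by positivity) (by positivity), Real.mul_rpow hN.le (by positivity),
          ← Real.rpow_mul hS, show p / 2 * r = m by linarith, Real.rpow_natCast]

section Symmetrization

variable [Countable ι] {Ω : Type*} [MeasurableSpace Ω] {μ : Measure Ω}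
  {Y : ι → Ω → ℝ}

lemma identDistrib_flip_signs (hY : ∀ i, Measurable (Y i)) (hind : iIndepFun Y μ)
    (hsym : ∀ i, IdentDistrib (Y i) (fun ω => -Y i ω) μ μ) (t : Finset ι) :
    IdentDistrib (fun ω i => if i ∈ t then -Y i ω else Y i ω) (fun ω i => Y i ω) μ μ := by
  have hflip : ∀ i, Measurable fun x : ℝ => if i ∈ t then -x else x := fun i => by
    split_ifs
    exacts [measurable_neg, measurable_id]
  refine IdentDistrib.pi (fun i => ?_) (hind.comp _ hflip) hind
  by_cases hi : i ∈ t
  · simpa [hi] using (hsym i).symm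
  · simpa [hi] using IdentDistrib.refl (hY i).aemeasurable

lemma lintegral_sum_powerset_rademacherSum (hY : ∀ i, Measurable (Y i)) (hind : iIndepFun Y μ)
    (hsym : ∀ i, IdentDistrib (Y i) (fun ω => -Y i ω) μ μ) {G : ℝ → ℝ≥0∞} (hG : Measurable G)
    (s : Finset ι) :
    ∫⁻ ω, ∑ t ∈ s.powerset, G (rademacherSum s t (Y · ω)) ∂μ
      = 2 ^ #s * ∫⁻ ω, G (∑ i ∈ s, Y i ω) ∂μ := by
  have hsum : Measurable fun y : ι → ℝ => G (∑ i ∈ s, y i) :=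
    hG.comp (Finset.measurable_sum _ fun i _ => measurable_pi_apply i)
  have h : ∀ t, IdentDistrib (fun ω => G (rademacherSum s t (Y · ω)))
      (fun ω => G (∑ i ∈ s, Y i ω)) μ μ := fun t =>
    (identDistrib_flip_signs hY hind hsym t).comp hsum
  rw [lintegral_finsetSum' _ fun t _ => (h t).aemeasurable_fst,
    sum_congr rfl fun t _ => (h t).lintegral_eq, sum_const, card_powerset, nsmul_eq_mul]
  push_cast
  rfl

lemma khintchine_lower_lintegral (hY : ∀ i, Measurable (Y i)) (hind : iIndepFun Y μ)
    (hsym : ∀ i, IdentDistrib (Y i) (fun ω => -Y i ω) μ μ) {p : ℝ} (hp : 2 ≤ p) (s : Finset ι) :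
    ∫⁻ ω, ENNReal.ofReal ((∑ i ∈ s, Y i ω ^ 2) ^ (p / 2)) ∂μ
      ≤ ∫⁻ ω, ENNReal.ofReal (|∑ i ∈ s, Y i ω| ^ p) ∂μ := by
  have hN : (2 : ℝ≥0∞) ^ #s ≠ ⊤ := ENNReal.pow_ne_top ENNReal.ofNat_ne_top
  rw [← ENNReal.mul_le_mul_iff_right (pow_ne_zero _ two_ne_zero) hN,
    ← lintegral_sum_powerset_rademacherSum hY hind hsym (measurable_abs.pow_const p).ennreal_ofReal,
    ← lintegral_const_mul' _ _ hN]
  refine lintegral_mono fun ω => ?_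
  rw [← ENNReal.ofReal_sum_of_nonneg fun _ _ => by positivity, ← ENNReal.ofReal_ofNat,
    ← ENNReal.ofReal_pow zero_le_two, ← ENNReal.ofReal_mul (by positivity)]
  exact ENNReal.ofReal_le_ofReal (khintchine_lower hp s _)

lemma khintchine_upper_lintegral (hY : ∀ i, Measurable (Y i)) (hind : iIndepFun Y μ)
    (hsym : ∀ i, IdentDistrib (Y i) (fun ω => -Y i ω) μ μ) {p : ℝ} (hp : 0 < p) (s : Finset ι) :
    ∫⁻ ω, ENNReal.ofReal (|∑ i ∈ s, Y i ω| ^ p) ∂μ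
      ≤ (2 * ⌈p / 2⌉₊)! * ∫⁻ ω, ENNReal.ofReal ((∑ i ∈ s, Y i ω ^ 2) ^ (p / 2)) ∂μ := by
  have hN : (2 : ℝ≥0∞) ^ #s ≠ ⊤ := ENNReal.pow_ne_top ENNReal.ofNat_ne_top
  rw [← ENNReal.mul_le_mul_iff_right (pow_ne_zero _ two_ne_zero) hN,
    ← lintegral_sum_powerset_rademacherSum hY hind hsym (measurable_abs.pow_const p).ennreal_ofReal,
    ← lintegral_const_mul' _ _ (ENNReal.natCast_ne_top _), ← lintegral_const_mul' _ _ hN]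
  refine lintegral_mono fun ω => ?_
  rw [← ENNReal.ofReal_sum_of_nonneg fun _ _ => by positivity, ← ENNReal.ofReal_ofNat,
    ← ENNReal.ofReal_natCast, ← ENNReal.ofReal_pow zero_le_two,
    ← ENNReal.ofReal_mul (by positivity),
    ← ENNReal.ofReal_mul (by positivity), ← mul_assoc]
  exact ENNReal.ofReal_le_ofReal (khintchine_upper hp s _)

end Symmetrization

end Khintchine

namespace ENNReal

lemma mul_rpow_sub_one {q : ℝ} (hq : 1 ≤ q) (x : ℝ≥0∞) : x * x ^ (q - 1) = x ^ q := by
  simpa using (rpow_add_of_nonneg (x := x) 1 (q - 1) zero_le_one (sub_nonneg.2 hq)).symm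

lemma add_rpow_le_two_rpow_mul {r : ℝ} (hr : 0 ≤ r) (x y : ℝ≥0∞) :
    (x + y) ^ r ≤ 2 ^ r * (x ^ r + y ^ r) := by
  calc (x + y) ^ r ≤ (2 * max x y) ^ r := by
        gcongr; rw [two_mul]; exact add_le_add (le_max_left x y) (le_max_right x y)
    _ = 2 ^ r * max x y ^ r := mul_rpow_of_nonneg _ _ hr
    _ ≤ 2 ^ r * (x ^ r + y ^ r) := by
        gcongr
        rcases max_choice x y with h | h <;> rw [h]
        exacts [le_self_add, le_add_self]

lemma sum_rpow_le_rpow_sum {ι : Type*} (s : Finset ι) (f : ι → ℝ≥0∞) {q : ℝ} (hq : 1 ≤ q) :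
    ∑ i ∈ s, f i ^ q ≤ (∑ i ∈ s, f i) ^ q := by
  classical
  induction s using Finset.induction_on with
  | empty => simp [zero_rpow_of_pos (by linarith : (0 : ℝ) < q)]
  | insert a s ha ih =>
    rw [sum_insert ha, sum_insert ha]
    exact (add_le_add_right ih _).trans (add_rpow_le_rpow_add _ _ hq)

lemma le_of_le_mul_rpow_add {A B E : ℝ≥0∞} {q : ℝ} (hq : 1 ≤ q) (hA : A ≠ ⊤)
    (h : A ≤ B * A ^ ((q - 1) / q) + E) : A ≤ (2 * B) ^ q + 2 * E := by
  rcases le_total (B * A ^ ((q - 1) / q)) E with hBE | hEB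
  · calc A ≤ E + E := h.trans (add_le_add_left hBE _)
      _ ≤ (2 * B) ^ q + 2 * E := by rw [← two_mul]; exact le_add_self
  rcases eq_or_ne A 0 with rfl | hA0
  · exact bot_le
  have hq0 : 0 < q := by linarith
  have hA' : A ^ ((q - 1) / q) ≠ 0 := by simp [rpow_eq_zero_iff, hA0, hA]
  have hA'' : A ^ ((q - 1) / q) ≠ ⊤ := rpow_ne_top_of_nonneg (by positivity) hA
  have hroot : A ^ q⁻¹ ≤ 2 * B := by
    rw [← ENNReal.mul_le_mul_iff_left hA' hA'', ← rpow_add _ _ hA0 hA,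
      show q⁻¹ + (q - 1) / q = 1 by field_simp; ring, rpow_one]
    calc A ≤ B * A ^ ((q - 1) / q) + B * A ^ ((q - 1) / q) := h.trans (add_le_add_right hEB _)
      _ = 2 * B * A ^ ((q - 1) / q) := by ring
  calc A = (A ^ q⁻¹) ^ q := by rw [← rpow_mul, inv_mul_cancel₀ hq0.ne', rpow_one]
    _ ≤ (2 * B) ^ q := by gcongr
    _ ≤ (2 * B) ^ q + 2 * E := le_self_add

end ENNReal

section Moments

variable {Ω : Type*} [MeasurableSpace Ω] {μ : Measure Ω} [IsProbabilityMeasure μ]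

lemma lintegral_rpow_le_lintegral_rpow_rpow {f : Ω → ℝ≥0∞} (hf : AEMeasurable f μ) {a b : ℝ}
    (ha : 0 ≤ a) (hab : a ≤ b) : ∫⁻ ω, f ω ^ a ∂μ ≤ (∫⁻ ω, f ω ^ b ∂μ) ^ (a / b) := by
  rcases ha.eq_or_lt with rfl | ha
  · simp
  have h := eLpNorm'_le_eLpNorm'_of_exponent_le ha hab μ hf.aestronglyMeasurable
  simp only [eLpNorm', enorm_eq_self] at h
  calc ∫⁻ ω, f ω ^ a ∂μ = ((∫⁻ ω, f ω ^ a ∂μ) ^ (1 / a)) ^ a := by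
        rw [← ENNReal.rpow_mul, one_div_mul_cancel ha.ne', ENNReal.rpow_one]
    _ ≤ ((∫⁻ ω, f ω ^ b ∂μ) ^ (1 / b)) ^ a := by gcongr
    _ = (∫⁻ ω, f ω ^ b ∂μ) ^ (a / b) := by rw [← ENNReal.rpow_mul, one_div_mul_eq_div]

lemma rpow_lintegral_le_lintegral_rpow {f : Ω → ℝ≥0∞} (hf : AEMeasurable f μ) {q : ℝ}
    (hq : 1 ≤ q) : (∫⁻ ω, f ω ∂μ) ^ q ≤ ∫⁻ ω, f ω ^ q ∂μ := by
  have h := lintegral_rpow_le_lintegral_rpow_rpow hf zero_le_one hq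
  simp only [ENNReal.rpow_one] at h
  calc (∫⁻ ω, f ω ∂μ) ^ q ≤ ((∫⁻ ω, f ω ^ q ∂μ) ^ (1 / q)) ^ q := by gcongr
    _ = ∫⁻ ω, f ω ^ q ∂μ := by
        rw [← ENNReal.rpow_mul, one_div_mul_cancel (by linarith), ENNReal.rpow_one]

end Moments

section Rosenthal

variable {Ω : Type*} [MeasurableSpace Ω] {μ : Measure Ω} {V : ℕ → Ω → ℝ≥0∞}

lemma lintegral_sum_range_comp (hid : ∀ i, IdentDistrib (V i) (V 0) μ μ) {F : ℝ≥0∞ → ℝ≥0∞}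
    (hF : Measurable F) (n : ℕ) :
    ∫⁻ ω, ∑ i ∈ range n, F (V i ω) ∂μ = n * ∫⁻ ω, F (V 0 ω) ∂μ :=
  calc ∫⁻ ω, ∑ i ∈ range n, F (V i ω) ∂μ = ∑ i ∈ range n, ∫⁻ ω, F (V i ω) ∂μ :=
        lintegral_finsetSum' _ fun i _ => ((hid i).comp hF).aemeasurable_fst
    _ = ∑ i ∈ range n, ∫⁻ ω, F (V 0 ω) ∂μ := sum_congr rfl fun i _ => ((hid i).comp hF).lintegral_eq
    _ = n * ∫⁻ ω, F (V 0 ω) ∂μ := by rw [sum_const, card_range, nsmul_eq_mul]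

lemma lintegral_mul_sum_rpow_sub_one_le (hV : ∀ i, Measurable (V i)) (hind : iIndepFun V μ)
    (hid : ∀ i, IdentDistrib (V i) (V 0) μ μ) {s : Finset ℕ} {i : ℕ} (hi : i ∈ s) {q : ℝ}
    (hq : 1 ≤ q) :
    ∫⁻ ω, V i ω * (∑ k ∈ s, V k ω) ^ (q - 1) ∂μ
      ≤ 2 ^ (q - 1) * ((∫⁻ ω, V 0 ω ∂μ) * ∫⁻ ω, (∑ k ∈ s, V k ω) ^ (q - 1) ∂μ
        + ∫⁻ ω, V 0 ω ^ q ∂μ) := by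
  set T := fun ω => ∑ k ∈ s.erase i, V k ω
  have hr : 0 ≤ q - 1 := sub_nonneg.2 hq
  have hT : Measurable T := Finset.measurable_sum _ fun k _ => hV k
  have hindep : IndepFun (V i) (fun ω => T ω ^ (q - 1)) μ := by
    have h := hind.indepFun_finsetSum_of_notMem hV (Finset.notMem_erase i s)
    rw [Finset.sum_fn] at h
    exact h.symm.comp measurable_id (measurable_id.pow_const _)
  have hpt : ∀ ω, V i ω * (∑ k ∈ s, V k ω) ^ (q - 1)
      ≤ 2 ^ (q - 1) * (V i ω * T ω ^ (q - 1) + V i ω ^ q) := fun ω =>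
    calc V i ω * (∑ k ∈ s, V k ω) ^ (q - 1) = V i ω * (T ω + V i ω) ^ (q - 1) := by
          rw [Finset.sum_erase_add _ _ hi]
      _ ≤ V i ω * (2 ^ (q - 1) * (T ω ^ (q - 1) + V i ω ^ (q - 1))) := by
          gcongr; exact ENNReal.add_rpow_le_two_rpow_mul hr _ _
      _ = 2 ^ (q - 1) * (V i ω * T ω ^ (q - 1) + V i ω ^ q) := by
          rw [← ENNReal.mul_rpow_sub_one hq (V i ω)]; ring
  have hVq : ∫⁻ ω, V i ω ^ q ∂μ = ∫⁻ ω, V 0 ω ^ q ∂μ :=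
    ((hid i).comp (measurable_id.pow_const q)).lintegral_eq
  calc ∫⁻ ω, V i ω * (∑ k ∈ s, V k ω) ^ (q - 1) ∂μ
      ≤ ∫⁻ ω, 2 ^ (q - 1) * (V i ω * T ω ^ (q - 1) + V i ω ^ q) ∂μ := lintegral_mono hpt
    _ = 2 ^ (q - 1) * ((∫⁻ ω, V i ω ∂μ) * ∫⁻ ω, T ω ^ (q - 1) ∂μ + ∫⁻ ω, V i ω ^ q ∂μ) := by
        rw [lintegral_const_mul' _ _ (ENNReal.rpow_ne_top_of_nonneg hr ENNReal.ofNat_ne_top),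
          lintegral_add_left (f := fun ω => V i ω * T ω ^ (q - 1)) ((hV i).mul (hT.pow_const _)),
          lintegral_mul_eq_lintegral_mul_lintegral_of_indepFun'' (hV i).aemeasurable
            (hT.pow_const _).aemeasurable hindep]
    _ ≤ 2 ^ (q - 1) * ((∫⁻ ω, V 0 ω ∂μ) * ∫⁻ ω, (∑ k ∈ s, V k ω) ^ (q - 1) ∂μ
          + ∫⁻ ω, V 0 ω ^ q ∂μ) := by
        rw [(hid i).lintegral_eq, hVq]
        gcongr with ω
        exact Finset.sum_le_sum_of_subset (Finset.erase_subset _ _)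

lemma lintegral_sum_rpow_le_mul_lintegral_sum_rpow_sub_one (hV : ∀ i, Measurable (V i))
    (hind : iIndepFun V μ) (hid : ∀ i, IdentDistrib (V i) (V 0) μ μ) (n : ℕ) {q : ℝ}
    (hq : 1 ≤ q) :
    ∫⁻ ω, (∑ i ∈ range n, V i ω) ^ q ∂μ
      ≤ 2 ^ (q - 1) * (n * (∫⁻ ω, V 0 ω ∂μ) * ∫⁻ ω, (∑ i ∈ range n, V i ω) ^ (q - 1) ∂μ
        + n * ∫⁻ ω, V 0 ω ^ q ∂μ) := by
  have hS : Measurable fun ω => ∑ i ∈ range n, V i ω := Finset.measurable_sum _ fun i _ => hV i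
  calc ∫⁻ ω, (∑ i ∈ range n, V i ω) ^ q ∂μ
      = ∑ i ∈ range n, ∫⁻ ω, V i ω * (∑ k ∈ range n, V k ω) ^ (q - 1) ∂μ := by
        rw [← lintegral_finsetSum (f := fun i ω => V i ω * (∑ k ∈ range n, V k ω) ^ (q - 1)) _
          fun i _ => (hV i).mul (hS.pow_const _)]
        simp_rw [← Finset.sum_mul, ENNReal.mul_rpow_sub_one hq]
    _ ≤ ∑ i ∈ range n, 2 ^ (q - 1) * ((∫⁻ ω, V 0 ω ∂μ)
          * ∫⁻ ω, (∑ k ∈ range n, V k ω) ^ (q - 1) ∂μ + ∫⁻ ω, V 0 ω ^ q ∂μ) :=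
        sum_le_sum fun i hi => lintegral_mul_sum_rpow_sub_one_le hV hind hid hi hq
    _ = _ := by rw [sum_const, card_range, nsmul_eq_mul]; ring

lemma lintegral_sum_rpow_le_natCast_rpow_mul (hid : ∀ i, IdentDistrib (V i) (V 0) μ μ) (n : ℕ)
    {q : ℝ} (hq : 1 ≤ q) :
    ∫⁻ ω, (∑ i ∈ range n, V i ω) ^ q ∂μ ≤ (n : ℝ≥0∞) ^ (q - 1) * (n * ∫⁻ ω, V 0 ω ^ q ∂μ) := by
  rw [← lintegral_sum_range_comp hid (F := fun x => x ^ q) (measurable_id.pow_const q),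
    ← lintegral_const_mul' _ _
      (ENNReal.rpow_ne_top_of_nonneg (sub_nonneg.2 hq) (ENNReal.natCast_ne_top n))]
  refine lintegral_mono fun ω => ?_
  simpa using ENNReal.rpow_sum_le_const_mul_sum_rpow (s := range n) (f := (V · ω)) hq

lemma lintegral_sum_rpow_le_rosenthal [IsProbabilityMeasure μ] (hV : ∀ i, Measurable (V i))
    (hind : iIndepFun V μ) (hid : ∀ i, IdentDistrib (V i) (V 0) μ μ) (n : ℕ) {q : ℝ}
    (hq : 1 ≤ q) :
    ∫⁻ ω, (∑ i ∈ range n, V i ω) ^ q ∂μ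
      ≤ (2 ^ q) ^ q * ((n * ∫⁻ ω, V 0 ω ∂μ) ^ q + n * ∫⁻ ω, V 0 ω ^ q ∂μ) := by
  have hS : Measurable fun ω => ∑ i ∈ range n, V i ω := Finset.measurable_sum _ fun i _ => hV i
  have hstep := lintegral_sum_rpow_le_mul_lintegral_sum_rpow_sub_one hV hind hid n hq
  have hjensen := lintegral_rpow_le_lintegral_rpow_rpow hS.aemeasurable (sub_nonneg.2 hq)
    (sub_le_self q zero_le_one) (μ := μ)
  have hcrude := lintegral_sum_rpow_le_natCast_rpow_mul hid n hq
  set A := ∫⁻ ω, (∑ i ∈ range n, V i ω) ^ q ∂μ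
  set m := ∫⁻ ω, V 0 ω ∂μ
  set v := ∫⁻ ω, V 0 ω ^ q ∂μ
  have h2 : (1 : ℝ≥0∞) ≤ 2 ^ q := ENNReal.one_le_rpow one_le_two (by linarith)
  by_cases hnv : (n : ℝ≥0∞) * v = ⊤
  · have h2q : ((2 : ℝ≥0∞) ^ q) ^ q ≠ 0 := by positivity
    simp [hnv, h2q]
  have hA : A ≠ ⊤ := (hcrude.trans_lt (ENNReal.mul_lt_top (ENNReal.rpow_lt_top_of_nonneg
    (sub_nonneg.2 hq) (ENNReal.natCast_ne_top n)) (lt_top_iff_ne_top.2 hnv))).ne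
  -- `A` is finite, so the `A ^ ((q - 1) / q)` on the right can be absorbed into the left.
  have habsorb : A ≤ (2 * (2 ^ (q - 1) * (n * m))) ^ q + 2 * (2 ^ (q - 1) * (n * v)) :=
    ENNReal.le_of_le_mul_rpow_add hq hA (hstep.trans (by rw [mul_add, ← mul_assoc]; gcongr))
  have h2q : (2 : ℝ≥0∞) ^ q ≤ (2 ^ q) ^ q := by
    simpa using ENNReal.rpow_le_rpow_of_exponent_le h2 hq
  calc A ≤ (2 * (2 ^ (q - 1) * (n * m))) ^ q + 2 * (2 ^ (q - 1) * (n * v)) := habsorb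
    _ = (2 ^ q) ^ q * (n * m) ^ q + 2 ^ q * (n * v) := by
        rw [← mul_assoc 2, ← mul_assoc 2, ENNReal.mul_rpow_sub_one hq,
          ENNReal.mul_rpow_of_nonneg (2 ^ q) _ (by linarith)]
    _ ≤ (2 ^ q) ^ q * ((n * m) ^ q + n * v) := by rw [mul_add]; gcongr

lemma rosenthal_le_two_mul_lintegral_sum_rpow [IsProbabilityMeasure μ]
    (hV : ∀ i, Measurable (V i)) (hid : ∀ i, IdentDistrib (V i) (V 0) μ μ) (n : ℕ) {q : ℝ}
    (hq : 1 ≤ q) :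
    (n * ∫⁻ ω, V 0 ω ∂μ) ^ q + n * ∫⁻ ω, V 0 ω ^ q ∂μ
      ≤ 2 * ∫⁻ ω, (∑ i ∈ range n, V i ω) ^ q ∂μ := by
  have hS : Measurable fun ω => ∑ i ∈ range n, V i ω := Finset.measurable_sum _ fun i _ => hV i
  have hmean : (n * ∫⁻ ω, V 0 ω ∂μ) ^ q ≤ ∫⁻ ω, (∑ i ∈ range n, V i ω) ^ q ∂μ := by
    rw [← lintegral_sum_range_comp hid (F := fun x => x) measurable_id]
    exact rpow_lintegral_le_lintegral_rpow hS.aemeasurable hq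
  have hsum : n * ∫⁻ ω, V 0 ω ^ q ∂μ ≤ ∫⁻ ω, (∑ i ∈ range n, V i ω) ^ q ∂μ := by
    rw [← lintegral_sum_range_comp hid (F := fun x => x ^ q) (measurable_id.pow_const q)]
    exact lintegral_mono fun ω => ENNReal.sum_rpow_le_rpow_sum _ _ hq
  rw [two_mul]
  exact add_le_add hmean hsum

end Rosenthal

section SquareFunction

variable {Ω : Type*} [MeasurableSpace Ω] {μ : Measure Ω} [IsProbabilityMeasure μ]
  {Y : ℕ → Ω → ℝ}

lemma rosenthal_sum_sq (hY : ∀ i, Measurable (Y i)) (hind : iIndepFun Y μ)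
    (hid : ∀ i, IdentDistrib (Y i) (Y 0) μ μ) (n : ℕ) {p : ℝ} (hp : 2 ≤ p) :
    (n : ℝ≥0∞) ^ (p / 2) * (∫⁻ ω, ENNReal.ofReal (Y 0 ω ^ 2) ∂μ) ^ (p / 2)
        + n * ∫⁻ ω, ENNReal.ofReal (|Y 0 ω| ^ p) ∂μ
        ≤ 2 * ∫⁻ ω, ENNReal.ofReal ((∑ i ∈ range n, Y i ω ^ 2) ^ (p / 2)) ∂μ ∧
      ∫⁻ ω, ENNReal.ofReal ((∑ i ∈ range n, Y i ω ^ 2) ^ (p / 2)) ∂μ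
        ≤ (2 ^ (p / 2)) ^ (p / 2) * ((n : ℝ≥0∞) ^ (p / 2)
            * (∫⁻ ω, ENNReal.ofReal (Y 0 ω ^ 2) ∂μ) ^ (p / 2)
          + n * ∫⁻ ω, ENNReal.ofReal (|Y 0 ω| ^ p) ∂μ) := by
  have hq : 1 ≤ p / 2 := by linarith
  have hsq : Measurable fun x : ℝ => ENNReal.ofReal (x ^ 2) :=
    (measurable_id.pow_const 2).ennreal_ofReal
  have hV : ∀ i, Measurable fun ω => ENNReal.ofReal (Y i ω ^ 2) := fun i => hsq.comp (hY i)
  have hVind : iIndepFun (fun i ω => ENNReal.ofReal (Y i ω ^ 2)) μ := hind.comp _ fun _ => hsq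
  have hVid : ∀ i, IdentDistrib (fun ω => ENNReal.ofReal (Y i ω ^ 2))
      (fun ω => ENNReal.ofReal (Y 0 ω ^ 2)) μ μ := fun i => (hid i).comp hsq
  have hsum : ∫⁻ ω, (∑ i ∈ range n, ENNReal.ofReal (Y i ω ^ 2)) ^ (p / 2) ∂μ
      = ∫⁻ ω, ENNReal.ofReal ((∑ i ∈ range n, Y i ω ^ 2) ^ (p / 2)) ∂μ :=
    lintegral_congr fun ω => by
      rw [← ENNReal.ofReal_sum_of_nonneg fun _ _ => sq_nonneg _,
        ENNReal.ofReal_rpow_of_nonneg (sum_nonneg fun _ _ => sq_nonneg _) (by linarith)]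
  have hpow : ∫⁻ ω, ENNReal.ofReal (Y 0 ω ^ 2) ^ (p / 2) ∂μ
      = ∫⁻ ω, ENNReal.ofReal (|Y 0 ω| ^ p) ∂μ :=
    lintegral_congr fun ω => by
      rw [ENNReal.ofReal_rpow_of_nonneg (sq_nonneg _) (by linarith), sq_rpow_div_two]
  have hlow := rosenthal_le_two_mul_lintegral_sum_rpow hV hVid n hq
  have hup := lintegral_sum_rpow_le_rosenthal hV hVind hVid n hq
  rw [hsum, hpow, ENNReal.mul_rpow_of_nonneg _ _ (by linarith)] at hlow hup
  exact ⟨hlow, hup⟩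

lemma khintchine_rosenthal_bounds (hY : ∀ i, Measurable (Y i)) (hind : iIndepFun Y μ)
    (hid : ∀ i, IdentDistrib (Y i) (Y 0) μ μ)
    (hsym : ∀ i, IdentDistrib (Y i) (fun ω => -Y i ω) μ μ) (n : ℕ) {p : ℝ} (hp : 2 ≤ p) :
    (∫⁻ ω, ENNReal.ofReal ((∑ i ∈ range n, Y i ω ^ 2) ^ (p / 2)) ∂μ
        ≤ ∫⁻ ω, ENNReal.ofReal (|∑ i ∈ range n, Y i ω| ^ p) ∂μ ∧
      ∫⁻ ω, ENNReal.ofReal (|∑ i ∈ range n, Y i ω| ^ p) ∂μ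
        ≤ (2 * ⌈p / 2⌉₊)! * ∫⁻ ω, ENNReal.ofReal ((∑ i ∈ range n, Y i ω ^ 2) ^ (p / 2)) ∂μ) ∧
    (2⁻¹ * ((n : ℝ≥0∞) ^ (p / 2) * (∫⁻ ω, ENNReal.ofReal (Y 0 ω ^ 2) ∂μ) ^ (p / 2)
          + n * ∫⁻ ω, ENNReal.ofReal (|Y 0 ω| ^ p) ∂μ)
        ≤ ∫⁻ ω, ENNReal.ofReal (|∑ i ∈ range n, Y i ω| ^ p) ∂μ ∧
      ∫⁻ ω, ENNReal.ofReal (|∑ i ∈ range n, Y i ω| ^ p) ∂μ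
        ≤ (2 * ⌈p / 2⌉₊)! * (2 ^ (p / 2)) ^ (p / 2) * ((n : ℝ≥0∞) ^ (p / 2)
            * (∫⁻ ω, ENNReal.ofReal (Y 0 ω ^ 2) ∂μ) ^ (p / 2)
          + n * ∫⁻ ω, ENNReal.ofReal (|Y 0 ω| ^ p) ∂μ)) := by
  have hlow := khintchine_lower_lintegral hY hind hsym hp (range n)
  have hup := khintchine_upper_lintegral hY hind hsym (by linarith : 0 < p) (range n)
  obtain ⟨hRlow, hRup⟩ := rosenthal_sum_sq hY hind hid n hp
  refine ⟨⟨hlow, hup⟩, ?_, hup.trans ?_⟩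
  · rw [ENNReal.inv_mul_le_iff two_ne_zero ENNReal.ofNat_ne_top]
    exact hRlow.trans (by gcongr)
  · rw [mul_assoc]
    gcongr

end SquareFunction

lemma lp.ofReal_norm_rpow_eq_tsum {α : Type*} {p : ℝ} (hp : 0 < p)
    (x : lp (fun _ : α => ℝ) (ENNReal.ofReal p)) :
    ENNReal.ofReal (‖x‖ ^ p) = ∑' j, ENNReal.ofReal (|x j| ^ p) := by
  have htr : (ENNReal.ofReal p).toReal = p := ENNReal.toReal_ofReal hp.le
  have h := lp.norm_rpow_eq_tsum (htr.symm ▸ hp) x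
  have hsum := (lp.memℓp x).summable (htr.symm ▸ hp)
  rw [htr] at h hsum
  simp only [Real.norm_eq_abs] at h hsum
  rw [h, ENNReal.ofReal_tsum_of_nonneg (fun _ => by positivity) hsum]

/-- in `ℓ^p` with `2 ≤ p < ∞`, for i.i.d. symmetric steps `Xᵢ`
with coordinates `X_{i,j}`, there are constants depending only on `p` such that
`E‖Sₙ‖^p ≍ ∑_j E(∑_{i<n} X_{i,j}²)^{p/2}` and (via Rosenthal's inequality)
`E‖Sₙ‖^p ≍ n^{p/2} ∑_j (E X_{0,j}²)^{p/2} + n ∑_j E|X_{0,j}|^p`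
(all quantities possibly infinite, interpreted in `ℝ≥0∞`). -/
theorem stmt19 (p : ℝ) (hp : 2 ≤ p) [Fact (1 ≤ ENNReal.ofReal p)]
    [MeasurableSpace (lp (fun _ : ℕ => ℝ) (ENNReal.ofReal p))]
    [BorelSpace (lp (fun _ : ℕ => ℝ) (ENNReal.ofReal p))] :
    ∃ c₁ C₁ c₂ C₂ : ℝ≥0∞, 0 < c₁ ∧ C₁ < ∞ ∧ 0 < c₂ ∧ C₂ < ∞ ∧
      ∀ (Ω : Type) [MeasureSpace Ω] [IsProbabilityMeasure (ℙ : Measure Ω)]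
        (X : ℕ → Ω → lp (fun _ : ℕ => ℝ) (ENNReal.ofReal p)),
        (∀ i, Measurable (X i)) →
        iIndepFun X ℙ →
        (∀ i, IdentDistrib (X i) (X 0) ℙ ℙ) →
        (∀ i, IdentDistrib (X i) (fun ω => -(X i ω)) ℙ ℙ) →
        ∀ n : ℕ,
          (c₁ * ∑' j : ℕ, ∫⁻ ω, ENNReal.ofReal
                ((∑ i ∈ Finset.range n, ((X i ω : ℕ → ℝ) j) ^ 2) ^ (p / 2))
              ≤ (∫⁻ ω, ENNReal.ofReal (‖∑ i ∈ Finset.range n, X i ω‖ ^ p)) ∧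
            (∫⁻ ω, ENNReal.ofReal (‖∑ i ∈ Finset.range n, X i ω‖ ^ p))
              ≤ C₁ * ∑' j : ℕ, ∫⁻ ω, ENNReal.ofReal
                ((∑ i ∈ Finset.range n, ((X i ω : ℕ → ℝ) j) ^ 2) ^ (p / 2)))
          ∧
          (c₂ * ((n : ℝ≥0∞) ^ (p / 2) *
                ∑' j : ℕ, (∫⁻ ω, ENNReal.ofReal (((X 0 ω : ℕ → ℝ) j) ^ 2)) ^ (p / 2)
              + (n : ℝ≥0∞) *
                ∑' j : ℕ, ∫⁻ ω, ENNReal.ofReal (|(X 0 ω : ℕ → ℝ) j| ^ p))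
              ≤ (∫⁻ ω, ENNReal.ofReal (‖∑ i ∈ Finset.range n, X i ω‖ ^ p)) ∧
            (∫⁻ ω, ENNReal.ofReal (‖∑ i ∈ Finset.range n, X i ω‖ ^ p))
              ≤ C₂ * ((n : ℝ≥0∞) ^ (p / 2) *
                ∑' j : ℕ, (∫⁻ ω, ENNReal.ofReal (((X 0 ω : ℕ → ℝ) j) ^ 2)) ^ (p / 2)
              + (n : ℝ≥0∞) *
                ∑' j : ℕ, ∫⁻ ω, ENNReal.ofReal (|(X 0 ω : ℕ → ℝ) j| ^ p))) := by
  have hD : ((2 : ℝ≥0∞) ^ (p / 2)) ^ (p / 2) < ⊤ := ENNReal.rpow_lt_top_of_nonneg (by linarith)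
    (ENNReal.rpow_lt_top_of_nonneg (by linarith) ENNReal.ofNat_ne_top).ne
  refine ⟨1, _, 2⁻¹, _, one_pos, ENNReal.natCast_lt_top (2 * ⌈p / 2⌉₊)!, by simp,
    ENNReal.mul_lt_top (ENNReal.natCast_lt_top (2 * ⌈p / 2⌉₊)!) hD, ?_⟩
  intro Ω _ _ X hX hind hid hsym n
  have hev : ∀ j, Measurable fun x : lp (fun _ : ℕ => ℝ) (ENNReal.ofReal p) => x j :=
    fun j => (lp.lipschitzWith_one_eval _ j).continuous.measurable
  have h := fun j => khintchine_rosenthal_bounds (Y := fun i ω => X i ω j)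
    (fun i => (hev j).comp (hX i)) (hind.comp _ fun _ => hev j) (fun i => (hid i).comp (hev j))
    (fun i => (hsym i).comp (hev j)) n hp
  have hnorm : ∫⁻ ω, ENNReal.ofReal (‖∑ i ∈ range n, X i ω‖ ^ p)
      = ∑' j, ∫⁻ ω, ENNReal.ofReal (|∑ i ∈ range n, (X i ω : ℕ → ℝ) j| ^ p) := by
    simp_rw [lp.ofReal_norm_rpow_eq_tsum (by linarith : 0 < p), lp.coeFn_sum, Finset.sum_apply]
    exact lintegral_tsum fun j => ((measurable_abs.pow_const p).ennreal_ofReal.comp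
      (Finset.measurable_sum _ fun i _ => (hev j).comp (hX i))).aemeasurable
  rw [hnorm, ← ENNReal.tsum_mul_left, ← ENNReal.tsum_mul_left, ← ENNReal.tsum_mul_left,
    ← ENNReal.tsum_mul_left, ← ENNReal.tsum_add, ← ENNReal.tsum_mul_left, ← ENNReal.tsum_mul_left]
  exact ⟨⟨ENNReal.tsum_le_tsum fun j => (one_mul _).trans_le (h j).1.1,
    ENNReal.tsum_le_tsum fun j => (h j).1.2⟩,
    ENNReal.tsum_le_tsum fun j => (h j).2.1, ENNReal.tsum_le_tsum fun j => (h j).2.2⟩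
end
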